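/- There exists an absolute constant C > 0 such that the following holds. For each n, let the martingale differences (X_i)_{1≤i≤n} satisfy conditions (A2) and (A3) with exponent ρ ∈ (0, 1]. Set ξ_i = X_i/B_n, ζ_i(λ) = λ ξ_i − λ² ξ_i²/2, b_i(λ) = E[ζ_i(λ) e^{ζ_i(λ)} | 𝓕_{i-1}] / E[e^{ζ_i(λ)} | 𝓕_{i-1}], B_n(λ) = Σ_{i=1}^n b_i(λ), and ⟨M⟩_n = Σ_{i=1}^n E[ξ_i² | 𝓕_{i-1}]. Then for any sequence (λ_n) with λ_n ≥ 0 and λ_n · min{ε_n, κ_n} → 0 (i.e. λ_n = o(max{ε_n^{-1}, κ_n^{-1}})), for all sufficiently large n one has almost surely | B_n(λ_n) − (λ_n²/2) ⟨M⟩_n | ≤ C λ_n^{2+ρ} ε_n^ρ. -/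

import Mathlib

open MeasureTheory Filter
open scoped Topology ENNReal

noncomputable def stdNormalCDF (x : ℝ) : ℝ :=
  (Real.sqrt (2 * Real.pi))⁻¹ * ∫ t in Set.Iic x, Real.exp (-(t ^ 2) / 2)

/-- A finite sequence of square-integrable martingale differences
`X 1, ..., X n` adapted to a filtration `F 0 ⊆ F 1 ⊆ ... ⊆ F n`, with
`F 0` trivial, `E[X i | F (i-1)] = 0` and `0 < E[(X i)^2] < ∞`. -/
structure MDS (Ω : Type) [mΩ : MeasurableSpace Ω] (P : Measure Ω) where
  n : ℕ
  npos : 0 < n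
  F : ℕ → MeasurableSpace Ω
  F_mono : Monotone F
  F_le : ∀ i, F i ≤ mΩ
  F_zero : F 0 = ⊥
  X : ℕ → Ω → ℝ
  meas : ∀ i, 1 ≤ i → i ≤ n → StronglyMeasurable[F i] (X i)
  sq_int : ∀ i, 1 ≤ i → i ≤ n → Integrable (fun ω => (X i ω) ^ 2) P
  mean_zero : ∀ i, 1 ≤ i → i ≤ n → P[X i|F (i - 1)] =ᵐ[P] 0
  var_pos : ∀ i, 1 ≤ i → i ≤ n → 0 < ∫ ω, (X i ω) ^ 2 ∂P

namespace MDS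

variable {Ω : Type} [mΩ : MeasurableSpace Ω] {P : Measure Ω}

/-- `S_n = ∑_{i=1}^n X_i`. -/
noncomputable def S (A : MDS Ω P) : Ω → ℝ := fun ω => ∑ i ∈ Finset.Icc 1 A.n, A.X i ω

/-- `B_n² = ∑_{i=1}^n E[X_i²]`. -/
noncomputable def Bsq (A : MDS Ω P) : ℝ := ∑ i ∈ Finset.Icc 1 A.n, ∫ ω, (A.X i ω) ^ 2 ∂P

/-- `[S]_n = ∑_{i=1}^n X_i²`. -/
noncomputable def QV (A : MDS Ω P) : Ω → ℝ := fun ω => ∑ i ∈ Finset.Icc 1 A.n, (A.X i ω) ^ 2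

/-- `⟨S⟩_n = ∑_{i=1}^n E[X_i² | F_{i-1}]`. -/
noncomputable def CV (A : MDS Ω P) : Ω → ℝ :=
  fun ω => ∑ i ∈ Finset.Icc 1 A.n, (P[fun ω' => (A.X i ω') ^ 2|A.F (i - 1)]) ω

/-- `W_n = S_n / √[S]_n`. -/
noncomputable def W (A : MDS Ω P) : Ω → ℝ := fun ω => A.S ω / Real.sqrt (A.QV ω)

/-- Condition (A1): `|⟨S⟩_n − B_n²| ≤ δ² B_n²` a.s., with `δ ∈ [0, 1/4]`. -/
def CondA1 (A : MDS Ω P) (δ : ℝ) : Prop :=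
  0 ≤ δ ∧ δ ≤ 1 / 4 ∧ ∀ᵐ ω ∂P, |A.CV ω - A.Bsq| ≤ δ ^ 2 * A.Bsq

/-- Condition (A2): `∑_{i=1}^n E[|X_i|^{2+ρ} | F_{i-1}] ≤ ε^ρ B_n^{2+ρ}` a.s.,
with `ε ∈ (0, 1/4]`. -/
def CondA2 (A : MDS Ω P) (ρ ε : ℝ) : Prop :=
  0 < ε ∧ ε ≤ 1 / 4 ∧
    (∀ i, 1 ≤ i → i ≤ A.n → Integrable (fun ω => |A.X i ω| ^ (2 + ρ)) P) ∧
    ∀ᵐ ω ∂P,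
      ∑ i ∈ Finset.Icc 1 A.n, (P[fun ω' => |A.X i ω'| ^ (2 + ρ)|A.F (i - 1)]) ω ≤
        ε ^ ρ * A.Bsq ^ ((2 + ρ) / 2)

/-- Condition (A3): `E[X_i² | F_{i-1}] ≤ κ² B_n²` a.s. for each `i`, with `κ ∈ (0, 1/4]`. -/
def CondA3 (A : MDS Ω P) (κ : ℝ) : Prop :=
  0 < κ ∧ κ ≤ 1 / 4 ∧
    ∀ i, 1 ≤ i → i ≤ A.n →
      ∀ᵐ ω ∂P, (P[fun ω' => (A.X i ω') ^ 2|A.F (i - 1)]) ω ≤ κ ^ 2 * A.Bsq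

/-- Condition (A4): `E[|X_i|^{2+ρ} | F_{i-1}] ≤ (γ B_n)^ρ E[X_i² | F_{i-1}]` a.s.
for each `i`, with `γ ∈ (0, 1/4]`. -/
def CondA4 (A : MDS Ω P) (ρ γ : ℝ) : Prop :=
  0 < γ ∧ γ ≤ 1 / 4 ∧
    (∀ i, 1 ≤ i → i ≤ A.n → Integrable (fun ω => |A.X i ω| ^ (2 + ρ)) P) ∧
    ∀ i, 1 ≤ i → i ≤ A.n →
      ∀ᵐ ω ∂P,
        (P[fun ω' => |A.X i ω'| ^ (2 + ρ)|A.F (i - 1)]) ω ≤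
          (γ * Real.sqrt A.Bsq) ^ ρ * (P[fun ω' => (A.X i ω') ^ 2|A.F (i - 1)]) ω

end MDS

namespace MDS

variable {Ω : Type} [mΩ : MeasurableSpace Ω] {P : Measure Ω}

/-- `ξ_i = X_i / B_n`. -/
noncomputable def xi (A : MDS Ω P) (i : ℕ) : Ω → ℝ := fun ω => A.X i ω / Real.sqrt A.Bsq

/-- `ζ_i(λ) = λ ξ_i − λ² ξ_i² / 2`. -/
noncomputable def zetaFn (A : MDS Ω P) (lam : ℝ) (i : ℕ) : Ω → ℝ :=
  fun ω => lam * A.xi i ω - lam ^ 2 * (A.xi i ω) ^ 2 / 2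

/-- `b_i(λ) = E[ζ_i(λ) e^{ζ_i(λ)} | F_{i-1}] / E[e^{ζ_i(λ)} | F_{i-1}]`. -/
noncomputable def bCoef (A : MDS Ω P) (lam : ℝ) (i : ℕ) : Ω → ℝ := fun ω =>
  (P[fun ω' => A.zetaFn lam i ω' * Real.exp (A.zetaFn lam i ω')|A.F (i - 1)]) ω /
    (P[fun ω' => Real.exp (A.zetaFn lam i ω')|A.F (i - 1)]) ω

/-- The drift process `B_n(λ) = ∑_{i=1}^n b_i(λ)`. -/
noncomputable def drift (A : MDS Ω P) (lam : ℝ) : Ω → ℝ :=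
  fun ω => ∑ i ∈ Finset.Icc 1 A.n, A.bCoef lam i ω

/-- `⟨M⟩_n = ∑_{i=1}^n E[ξ_i² | F_{i-1}]`. -/
noncomputable def McondVar (A : MDS Ω P) : Ω → ℝ :=
  fun ω => ∑ i ∈ Finset.Icc 1 A.n, (P[fun ω' => (A.xi i ω') ^ 2|A.F (i - 1)]) ω

end MDS

/-!
Fix a summand, write `ξ = ξ_i`, `σ² = E[ξ² | 𝓕_{i-1}]`, `τ = E[|ξ|^{2+ρ} | 𝓕_{i-1}]` and
`ζ = λξ - λ²ξ²/2 ≤ 1/2`, and let `N = E[ζ e^ζ | 𝓕_{i-1}]`, `D = E[e^ζ | 𝓕_{i-1}]`, so `b_i = N / D`.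
The Taylor bounds `ζ e^ζ = λξ + λ²ξ²/2 + O(|λξ|^{2+ρ})` and `e^ζ = 1 + λξ + O(λ²ξ²)`, conditioned
with `E[ξ | 𝓕_{i-1}] = 0`, give `N = λ²σ²/2 + O(λ^{2+ρ} τ)` and `D = 1 + O(λ²σ²)`. The conditional
Lyapunov inequality `σ^{2+ρ} ≤ τ` then handles both regimes: when `λ²σ²` is small, `D ≥ 1/2` and
the error `λ⁴σ⁴` is at most `λ^{2+ρ} τ`; when it is large, `λ²σ² ≤ 4 λ^{2+ρ} τ` and the crude
bounds `-λ²σ²/2 ≤ N / D ≤ 1/2` suffice, the lower one being Chebyshev's association inequality for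
`ζ` and `e^ζ`, since `E[ζ | 𝓕_{i-1}] = -λ²σ²/2`. Summing over `i`, (A2) bounds `∑ τ_i` by `ε^ρ`.
-/

open Real

theorem sub_sq_div_two_le_half (u : ℝ) : u - u ^ 2 / 2 ≤ 1 / 2 := by
  nlinarith [sq_nonneg (u - 1)]

theorem exp_sub_one_sub_le_two_mul_sq {z : ℝ} (hz : z ≤ 1 / 2) : exp z - 1 - z ≤ 2 * z ^ 2 := by
  -- `exp z ≤ 1 / (1 - z)` and `1 / (1 - z) - 1 - z = z ^ 2 / (1 - z)`
  have h : (1 - z) * exp z ≤ 1 := by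
    have := add_one_le_exp (-z)
    rw [exp_neg] at this
    nlinarith [exp_pos z, mul_inv_cancel₀ (exp_pos z).ne']
  nlinarith [exp_pos z, mul_nonneg (sq_nonneg z) (by linarith : (0:ℝ) ≤ 1 - 2 * z)]

theorem exp_half_lt_two : exp (1 / 2) < 2 := by
  have h : exp (1 / 2) * exp (1 / 2) = exp 1 := by rw [← exp_add]; norm_num
  nlinarith [exp_one_lt_d9, exp_pos (1 / 2)]

theorem abs_mul_exp_le_one {z : ℝ} (hz : z ≤ 1 / 2) : |z * exp z| ≤ 1 := by
  rcases le_or_gt z 0 with h | h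
  · have := add_one_le_exp (-z)
    rw [exp_neg] at this
    rw [abs_of_nonpos (mul_nonpos_of_nonpos_of_nonneg h (exp_pos z).le)]
    nlinarith [exp_pos z, mul_inv_cancel₀ (exp_pos z).ne']
  · have := exp_le_exp.2 hz
    rw [abs_of_nonneg (mul_nonneg h.le (exp_pos z).le)]
    nlinarith [exp_half_lt_two, exp_pos z]

theorem abs_sub_sq_div_two_le {u : ℝ} (hu : |u| ≤ 1) : |u - u ^ 2 / 2| ≤ 3 / 2 * |u| := by
  rw [abs_le]
  constructor <;> nlinarith [neg_abs_le u, le_abs_self u, abs_nonneg u, sq_abs u]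

theorem abs_exp_sub_sq_div_two_sub_le (u : ℝ) :
    |exp (u - u ^ 2 / 2) - 1 - u| ≤ 5 * u ^ 2 := by
  have hz := sub_sq_div_two_le_half u
  rcases le_or_gt |u| 1 with hu | hu
  · have hzu := abs_sub_sq_div_two_le hu
    have hE2 := exp_sub_one_sub_le_two_mul_sq hz
    have hE0 := add_one_le_exp (u - u ^ 2 / 2)
    rw [show exp (u - u ^ 2 / 2) - 1 - u
        = (exp (u - u ^ 2 / 2) - 1 - (u - u ^ 2 / 2)) - u ^ 2 / 2 by ring]
    generalize u - u ^ 2 / 2 = z at *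
    have hz2 : z ^ 2 ≤ 9 / 4 * u ^ 2 := by
      nlinarith [sq_abs z, sq_abs u, abs_nonneg z, abs_nonneg u]
    rw [abs_le]; constructor <;> nlinarith [sq_nonneg u]
  · have h1 := exp_le_exp.2 hz
    have hu2 : |u| ≤ u ^ 2 := by nlinarith [sq_abs u]
    rw [abs_le]
    constructor <;>
      nlinarith [exp_pos (u - u ^ 2 / 2), le_abs_self u, neg_abs_le u, exp_half_lt_two]

theorem abs_mul_exp_sub_sq_div_two_sub_le_of_abs_le_one {u : ℝ} (hu : |u| ≤ 1) :
    |(u - u ^ 2 / 2) * exp (u - u ^ 2 / 2) - u - u ^ 2 / 2| ≤ 8 * |u| ^ 3 := by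
  have hzu := abs_sub_sq_div_two_le hu
  have hE2 := exp_sub_one_sub_le_two_mul_sq (sub_sq_div_two_le_half u)
  have hE0 := add_one_le_exp (u - u ^ 2 / 2)
  have hdecomp : (u - u ^ 2 / 2) * exp (u - u ^ 2 / 2) - u - u ^ 2 / 2 =
      (-u ^ 3 + u ^ 4 / 4) + (u - u ^ 2 / 2) * (exp (u - u ^ 2 / 2) - 1 - (u - u ^ 2 / 2)) := by
    ring
  rw [hdecomp]
  generalize u - u ^ 2 / 2 = z at *
  have hzE : |z * (exp z - 1 - z)| ≤ 27 / 4 * |u| ^ 3 := by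
    have h3 : |z| ^ 3 ≤ (3 / 2 * |u|) ^ 3 := pow_le_pow_left₀ (abs_nonneg z) hzu 3
    rw [abs_mul, abs_of_nonneg (show 0 ≤ exp z - 1 - z by linarith)]
    nlinarith [sq_abs z, abs_nonneg z, mul_le_mul_of_nonneg_left hE2 (abs_nonneg z)]
  have hpoly : |-u ^ 3 + u ^ 4 / 4| ≤ 5 / 4 * |u| ^ 3 := by
    have hu4 : |u| ^ 4 ≤ |u| ^ 3 := pow_le_pow_of_le_one (abs_nonneg u) hu (by norm_num)
    calc |-u ^ 3 + u ^ 4 / 4| ≤ |-u ^ 3| + |u ^ 4 / 4| := abs_add_le _ _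
      _ = |u| ^ 3 + |u| ^ 4 / 4 := by rw [abs_neg, abs_div, abs_pow, abs_pow]; norm_num
      _ ≤ 5 / 4 * |u| ^ 3 := by linarith
  linarith [abs_add_le (-u ^ 3 + u ^ 4 / 4) (z * (exp z - 1 - z))]

theorem abs_mul_exp_sub_sq_div_two_sub_le_of_one_le_abs {u : ℝ} (hu : 1 ≤ |u|) :
    |(u - u ^ 2 / 2) * exp (u - u ^ 2 / 2) - u - u ^ 2 / 2| ≤ 3 * u ^ 2 := by
  have h := abs_le.1 (abs_mul_exp_le_one (sub_sq_div_two_le_half u))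
  have hu2 : |u| ≤ u ^ 2 := by nlinarith [sq_abs u]
  rw [abs_le]
  constructor <;> nlinarith [le_abs_self u, neg_abs_le u, sq_nonneg u]

theorem abs_mul_exp_sub_sq_div_two_sub_le {ρ : ℝ} (hρ : 0 ≤ ρ) (hρ1 : ρ ≤ 1) (u : ℝ) :
    |(u - u ^ 2 / 2) * exp (u - u ^ 2 / 2) - u - u ^ 2 / 2| ≤ 8 * |u| ^ (2 + ρ) := by
  rcases le_total |u| 1 with hu | hu
  · have h3 : |u| ^ (3 : ℝ) ≤ |u| ^ (2 + ρ) :=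
      rpow_le_rpow_of_exponent_ge' (abs_nonneg u) hu (by linarith) (by linarith)
    rw [rpow_ofNat] at h3
    linarith [abs_mul_exp_sub_sq_div_two_sub_le_of_abs_le_one hu]
  · have h2 : |u| ^ (2 : ℝ) ≤ |u| ^ (2 + ρ) := rpow_le_rpow_of_exponent_le hu (by linarith)
    rw [rpow_ofNat, sq_abs] at h2
    linarith [abs_mul_exp_sub_sq_div_two_sub_le_of_one_le_abs hu,
      rpow_nonneg (abs_nonneg u) (2 + ρ)]

noncomputable def tilt (lam x : ℝ) : ℝ := lam * x - lam ^ 2 * x ^ 2 / 2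

theorem tilt_eq (lam x : ℝ) : tilt lam x = lam * x - (lam * x) ^ 2 / 2 := by
  unfold tilt; ring

theorem tilt_le_half (lam x : ℝ) : tilt lam x ≤ 1 / 2 := by
  rw [tilt_eq]; exact sub_sq_div_two_le_half _

theorem sq_le_of_rpow_le {ρ s T : ℝ} (hρ0 : 0 ≤ ρ) (hρ2 : ρ ≤ 2) (hs0 : 0 ≤ s) (hs1 : s ≤ 1)
    (h : s ^ ((2 + ρ) / 2) ≤ T) : s ^ 2 ≤ T := by
  have : s ^ (2 : ℝ) ≤ s ^ ((2 + ρ) / 2) :=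
    rpow_le_rpow_of_exponent_ge' hs0 hs1 (by linarith) (by linarith)
  rw [rpow_ofNat] at this
  linarith

theorem le_four_mul_of_rpow_le {ρ s T : ℝ} (hρ0 : 0 ≤ ρ) (hρ1 : ρ ≤ 1) (hs : 1 / 16 ≤ s)
    (h : s ^ ((2 + ρ) / 2) ≤ T) : s ≤ 4 * T := by
  have hs0 : 0 < s := by linarith
  have hsplit : s ^ ((2 + ρ) / 2) = s * s ^ (ρ / 2) := by
    rw [show (2 + ρ) / 2 = 1 + ρ / 2 by ring, rpow_add hs0, rpow_one]
  have hquarter : (1 / 4 : ℝ) ≤ s ^ (ρ / 2) :=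
    calc (1 / 4 : ℝ) ≤ (1 / 4) ^ ρ := by
          simpa using rpow_le_rpow_of_exponent_ge (by norm_num : (0 : ℝ) < 1 / 4)
            (by norm_num) hρ1
      _ = (1 / 16) ^ (ρ / 2) := by
          rw [show (1 / 16 : ℝ) = (1 / 4) ^ (2 : ℝ) by norm_num, ← rpow_mul (by norm_num)]
          ring_nf
      _ ≤ s ^ (ρ / 2) := rpow_le_rpow (by norm_num) hs (by positivity)
  nlinarith

theorem abs_div_sub_half_le {ρ s T N D : ℝ} (hρ0 : 0 ≤ ρ) (hρ1 : ρ ≤ 1) (hs : 0 ≤ s)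
    (hT : s ^ ((2 + ρ) / 2) ≤ T) (hN : |N - s / 2| ≤ 8 * T) (hD : |D - 1| ≤ 5 * s)
    (hD0 : 0 < D) (hND : N ≤ D / 2) (hsND : -(s / 2) * D ≤ N) :
    |N / D - s / 2| ≤ 32 * T := by
  rcases le_or_gt s (1 / 16) with hsmall | hlarge
  · have hs2 := sq_le_of_rpow_le hρ0 (by linarith) hs (by linarith) hT
    have hD1 : 11 / 16 ≤ D := by linarith [(abs_le.1 hD).1]
    have hnum : |N - s / 2 * D| ≤ 8 * T + 5 / 2 * s ^ 2 :=
      calc |N - s / 2 * D| = |(N - s / 2) - s / 2 * (D - 1)| := by ring_nf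
        _ ≤ |N - s / 2| + |s / 2 * (D - 1)| := abs_sub _ _
        _ ≤ 8 * T + 5 / 2 * s ^ 2 := by
          rw [abs_mul, abs_of_nonneg (by positivity : 0 ≤ s / 2)]
          nlinarith [mul_le_mul_of_nonneg_left hD (by positivity : 0 ≤ s / 2)]
    rw [show N / D - s / 2 = (N - s / 2 * D) / D by field_simp, abs_div, abs_of_pos hD0,
      div_le_iff₀ hD0]
    nlinarith [abs_nonneg (N - s / 2 * D), le_trans (abs_nonneg _) hN]
  · have h4 := le_four_mul_of_rpow_le hρ0 hρ1 hlarge.le hT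
    have hup : N / D ≤ 1 / 2 := by rw [div_le_iff₀ hD0]; linarith
    have hlow : -(s / 2) ≤ N / D := by rw [le_div_iff₀ hD0]; linarith
    rw [abs_le]
    constructor <;> linarith

theorem Monotone.mul_add_mul_sub_mul_le {g : ℝ → ℝ} (hg : Monotone g) (x c : ℝ) :
    c * g x + g c * x - c * g c ≤ x * g x := by
  have h : 0 ≤ (x - c) * (g x - g c) := by
    rcases le_total x c with h | h
    · exact mul_nonneg_of_nonpos_of_nonpos (by linarith) (by linarith [hg h])
    · exact mul_nonneg (by linarith) (by linarith [hg h])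
  linarith

section CondExp

variable {Ω : Type*} {m m0 : MeasurableSpace Ω} {μ : Measure Ω} {ξ : Ω → ℝ}

theorem ae_abs_condExp_sub_condExp_le {f g h : Ω → ℝ} (hf : Integrable f μ)
    (hg : Integrable g μ) (hh : Integrable h μ) (hfg : ∀ᵐ ω ∂μ, |f ω - g ω| ≤ h ω) :
    ∀ᵐ ω ∂μ, |μ[f|m] ω - μ[g|m] ω| ≤ μ[h|m] ω := by
  have hmono : μ[fun ω => |f ω - g ω| | m] ≤ᵐ[μ] μ[h|m] := condExp_mono (hf.sub hg).abs hh hfg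
  filter_upwards [condExp_sub hf hg m, abs_condExp_ae_le_condExp_abs (m := m) (μ := μ) (f - g),
    hmono] with ω hsub habs hle
  rw [← Pi.sub_apply, ← hsub]
  exact habs.trans hle

theorem condExp_const_add_mul_add_mul_sq (hm : m ≤ m0) [IsFiniteMeasure μ]
    (hξ : Integrable ξ μ) (hξ2 : Integrable (fun ω => ξ ω ^ 2) μ) (hmean : μ[ξ|m] =ᵐ[μ] 0)
    (k a b : ℝ) :
    μ[fun ω => k + a * ξ ω + b * ξ ω ^ 2|m] =ᵐ[μ]
      fun ω => k + b * μ[fun ω => ξ ω ^ 2|m] ω := by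
  have hlin : Integrable (fun ω => k + a * ξ ω) μ := (integrable_const k).add (hξ.const_mul a)
  filter_upwards [condExp_add hlin (hξ2.const_mul b) m,
    condExp_add (integrable_const k) (hξ.const_mul a) m, condExp_smul a ξ m,
    condExp_smul b (fun ω => ξ ω ^ 2) m, hmean] with ω h1 h2 h3 h4 h5
  change μ[(fun ω => k + a * ξ ω) + fun ω => b * ξ ω ^ 2|m] ω = _
  rw [h1, Pi.add_apply, show (fun ω => k + a * ξ ω) = (fun _ => k) + fun ω => a * ξ ω from rfl,
    h2, Pi.add_apply, condExp_const hm]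
  change k + μ[a • ξ|m] ω + μ[b • fun ω => ξ ω ^ 2|m] ω = _
  rw [h3, h4]
  simp [h5]

/-- Conditional form of Chebyshev's association inequality. -/
theorem ae_condExp_mul_condExp_comp_le (hm : m ≤ m0) [IsFiniteMeasure μ] {g : ℝ → ℝ}
    (hg : Monotone g) {f : Ω → ℝ} (hf : Integrable f μ) (hgf : Integrable (fun ω => g (f ω)) μ)
    (hfgf : Integrable (fun ω => f ω * g (f ω)) μ) {C : ℝ} (hC : ∀ᵐ ω ∂μ, |μ[f|m] ω| ≤ C) :
    ∀ᵐ ω ∂μ, μ[f|m] ω * μ[fun ω => g (f ω)|m] ω ≤ μ[fun ω => f ω * g (f ω)|m] ω := by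
  set c := μ[f|m]
  have hc : StronglyMeasurable[m] c := stronglyMeasurable_condExp
  have hgc : StronglyMeasurable[m] fun ω => g (c ω) :=
    (hg.measurable.comp hc.measurable).stronglyMeasurable
  have hgcC : ∀ᵐ ω ∂μ, ‖g (c ω)‖ ≤ max |g (-C)| |g C| := by
    filter_upwards [hC] with ω hω
    obtain ⟨hlo, hhi⟩ := abs_le.1 hω
    exact abs_le_max_abs_abs (hg hlo) (hg hhi)
  have hcg : Integrable (fun ω => c ω * g (f ω)) μ :=
    hgf.bdd_mul (hc.mono hm).aestronglyMeasurable hC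
  have hgcf : Integrable (fun ω => g (c ω) * f ω) μ :=
    hf.bdd_mul (hgc.mono hm).aestronglyMeasurable hgcC
  have hcgc : Integrable (fun ω => c ω * g (c ω)) μ :=
    integrable_condExp.bdd_mul (hgc.mono hm).aestronglyMeasurable hgcC |>.congr
      (ae_of_all _ fun ω => mul_comm _ _)
  -- after conditioning, the last two terms on the left of `hpt` cancel
  have hpt : (fun ω => c ω * g (f ω) + g (c ω) * f ω - c ω * g (c ω)) ≤ᵐ[μ]
      fun ω => f ω * g (f ω) := ae_of_all _ fun ω => hg.mul_add_mul_sub_mul_le (f ω) (c ω)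
  have hcg' : μ[fun ω => c ω * g (f ω)|m] =ᵐ[μ] fun ω => c ω * μ[fun ω => g (f ω)|m] ω :=
    condExp_stronglyMeasurable_mul_of_bound hm hc hgf C hC
  have hgcf' : μ[fun ω => g (c ω) * f ω|m] =ᵐ[μ] fun ω => g (c ω) * c ω :=
    condExp_stronglyMeasurable_mul_of_bound hm hgc hf _ hgcC
  have hcgc' : μ[fun ω => c ω * g (c ω)|m] = fun ω => c ω * g (c ω) :=
    condExp_of_stronglyMeasurable hm (hc.mul hgc) hcgc
  filter_upwards [condExp_mono ((hcg.add hgcf).sub hcgc) hfgf hpt,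
    condExp_sub (hcg.add hgcf) hcgc m, condExp_add hcg hgcf m, hcg', hgcf'] with ω hle h1 h2 h3 h4
  change μ[(fun ω => c ω * g (f ω)) + (fun ω => g (c ω) * f ω) - fun ω => c ω * g (c ω)|m] ω
    ≤ _ at hle
  rw [h1, Pi.sub_apply, h2, Pi.add_apply, h3, h4, hcgc'] at hle
  linarith

theorem MeasureTheory.Integrable.tilt (hξ : Integrable ξ μ) (hξ2 : Integrable (fun ω => ξ ω ^ 2) μ)
    (lam : ℝ) : Integrable (fun ω => tilt lam (ξ ω)) μ :=
  (hξ.const_mul lam).sub ((hξ2.const_mul (lam ^ 2)).div_const 2)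

theorem MeasureTheory.AEStronglyMeasurable.tilt (hξ : AEStronglyMeasurable ξ μ) (lam : ℝ) :
    AEStronglyMeasurable (fun ω => tilt lam (ξ ω)) μ :=
  (continuous_const.mul continuous_id |>.sub
    ((continuous_const.mul (continuous_pow 2)).div_const 2)).comp_aestronglyMeasurable hξ

theorem integrable_exp_tilt [IsFiniteMeasure μ] (hξ : AEStronglyMeasurable ξ μ) (lam : ℝ) :
    Integrable (fun ω => exp (tilt lam (ξ ω))) μ :=
  Integrable.mono' (integrable_const (exp (1 / 2)))
    (continuous_exp.comp_aestronglyMeasurable (hξ.tilt lam)) <| ae_of_all _ fun ω => by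
      rw [norm_eq_abs, abs_of_pos (exp_pos _)]
      exact exp_le_exp.2 (tilt_le_half lam _)

theorem integrable_tilt_mul_exp_tilt [IsFiniteMeasure μ] (hξ : AEStronglyMeasurable ξ μ)
    (lam : ℝ) : Integrable (fun ω => tilt lam (ξ ω) * exp (tilt lam (ξ ω))) μ :=
  Integrable.mono' (integrable_const 1)
    ((hξ.tilt lam).mul (continuous_exp.comp_aestronglyMeasurable (hξ.tilt lam)))
    (ae_of_all _ fun _ => abs_mul_exp_le_one (tilt_le_half lam _))

theorem condExp_tilt (hm : m ≤ m0) [IsFiniteMeasure μ] (hξ : Integrable ξ μ)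
    (hξ2 : Integrable (fun ω => ξ ω ^ 2) μ) (hmean : μ[ξ|m] =ᵐ[μ] 0) (lam : ℝ) :
    μ[fun ω => tilt lam (ξ ω)|m] =ᵐ[μ] fun ω => -(lam ^ 2 / 2) * μ[fun ω => ξ ω ^ 2|m] ω := by
  have h := condExp_const_add_mul_add_mul_sq hm hξ hξ2 hmean 0 lam (-(lam ^ 2 / 2))
  simp only [zero_add] at h
  convert h using 3
  unfold tilt; ring

theorem ae_abs_condExp_exp_tilt_sub_one_le (hm : m ≤ m0) [IsFiniteMeasure μ]
    (hξ : Integrable ξ μ) (hξ2 : Integrable (fun ω => ξ ω ^ 2) μ) (hmean : μ[ξ|m] =ᵐ[μ] 0)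
    (lam : ℝ) :
    ∀ᵐ ω ∂μ, |μ[fun ω => exp (tilt lam (ξ ω))|m] ω - 1| ≤
      5 * lam ^ 2 * μ[fun ω => ξ ω ^ 2|m] ω := by
  have hlin : Integrable (fun ω => 1 + lam * ξ ω + 0 * ξ ω ^ 2) μ :=
    ((integrable_const 1).add (hξ.const_mul lam)).add (hξ2.const_mul 0)
  have hpt : ∀ᵐ ω ∂μ, |exp (tilt lam (ξ ω)) - (1 + lam * ξ ω + 0 * ξ ω ^ 2)| ≤
      5 * lam ^ 2 * ξ ω ^ 2 := ae_of_all _ fun ω => by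
    have := abs_exp_sub_sq_div_two_sub_le (lam * ξ ω)
    rw [tilt_eq, show ∀ e : ℝ, e - (1 + lam * ξ ω + 0 * ξ ω ^ 2) = e - 1 - lam * ξ ω from
      fun e => by ring]
    linarith [show 5 * (lam * ξ ω) ^ 2 = 5 * lam ^ 2 * ξ ω ^ 2 by ring]
  filter_upwards [ae_abs_condExp_sub_condExp_le (m := m) (integrable_exp_tilt hξ.1 lam) hlin
      (hξ2.const_mul (5 * lam ^ 2)) hpt,
    condExp_const_add_mul_add_mul_sq hm hξ hξ2 hmean 1 lam 0,
    condExp_smul (5 * lam ^ 2) (fun ω => ξ ω ^ 2) m] with ω h h1 h2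
  rw [h1] at h
  change _ ≤ μ[(5 * lam ^ 2) • fun ω => ξ ω ^ 2|m] ω at h
  rw [h2] at h
  simpa [mul_assoc] using h

theorem ae_abs_condExp_tilt_mul_exp_tilt_sub_le (hm : m ≤ m0) [IsFiniteMeasure μ] {ρ : ℝ}
    (hρ0 : 0 ≤ ρ) (hρ1 : ρ ≤ 1) (hξ : Integrable ξ μ) (hξ2 : Integrable (fun ω => ξ ω ^ 2) μ)
    (hξρ : Integrable (fun ω => |ξ ω| ^ (2 + ρ)) μ) (hmean : μ[ξ|m] =ᵐ[μ] 0) {lam : ℝ}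
    (hlam : 0 ≤ lam) :
    ∀ᵐ ω ∂μ, |μ[fun ω => tilt lam (ξ ω) * exp (tilt lam (ξ ω))|m] ω -
        lam ^ 2 / 2 * μ[fun ω => ξ ω ^ 2|m] ω| ≤
      8 * lam ^ (2 + ρ) * μ[fun ω => |ξ ω| ^ (2 + ρ)|m] ω := by
  have hquad : Integrable (fun ω => 0 + lam * ξ ω + lam ^ 2 / 2 * ξ ω ^ 2) μ :=
    ((integrable_const 0).add (hξ.const_mul lam)).add (hξ2.const_mul (lam ^ 2 / 2))
  have hpt : ∀ᵐ ω ∂μ, |tilt lam (ξ ω) * exp (tilt lam (ξ ω)) -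
      (0 + lam * ξ ω + lam ^ 2 / 2 * ξ ω ^ 2)| ≤ 8 * lam ^ (2 + ρ) * |ξ ω| ^ (2 + ρ) :=
    ae_of_all _ fun ω => by
      have := abs_mul_exp_sub_sq_div_two_sub_le hρ0 hρ1 (lam * ξ ω)
      rw [abs_mul, abs_of_nonneg hlam, mul_rpow hlam (abs_nonneg _), ← mul_assoc] at this
      rw [tilt_eq]
      convert this using 2; ring
  filter_upwards [ae_abs_condExp_sub_condExp_le (m := m) (integrable_tilt_mul_exp_tilt hξ.1 lam)
      hquad (hξρ.const_mul (8 * lam ^ (2 + ρ))) hpt,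
    condExp_const_add_mul_add_mul_sq hm hξ hξ2 hmean 0 lam (lam ^ 2 / 2),
    condExp_smul (8 * lam ^ (2 + ρ)) (fun ω => |ξ ω| ^ (2 + ρ)) m] with ω h h1 h2
  rw [h1, zero_add] at h
  change _ ≤ μ[(8 * lam ^ (2 + ρ)) • fun ω => |ξ ω| ^ (2 + ρ)|m] ω at h
  rwa [h2] at h

theorem ae_rpow_condExp_sq_le {ρ : ℝ} (hρ0 : 0 ≤ ρ)
    (hξρ : Integrable (fun ω => |ξ ω| ^ (2 + ρ)) μ) :
    ∀ᵐ ω ∂μ, μ[fun ω => ξ ω ^ 2|m] ω ^ ((2 + ρ) / 2) ≤ μ[fun ω => |ξ ω| ^ (2 + ρ)|m] ω := by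
  have hpow : (fun ω => ‖ξ ω ^ 2‖ ^ ((2 + ρ) / 2)) = fun ω => |ξ ω| ^ (2 + ρ) := by
    ext ω
    rw [norm_pow, norm_eq_abs, ← rpow_natCast, ← rpow_mul (abs_nonneg _)]
    congr 1; push_cast; ring
  have hjensen := Integrable.norm_condExp_rpow_le (m := m) (f := fun ω => ξ ω ^ 2)
    (p := (2 + ρ) / 2) (by linarith) (hpow ▸ hξρ)
  rw [hpow] at hjensen
  filter_upwards [hjensen, condExp_nonneg (m := m) (ae_of_all μ fun ω => sq_nonneg (ξ ω))]
    with ω h hnn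
  rwa [norm_eq_abs, abs_of_nonneg hnn] at h

theorem ae_condExp_exp_tilt_pos (hm : m ≤ m0) [IsFiniteMeasure μ] (hξ : Integrable ξ μ)
    (hξ2 : Integrable (fun ω => ξ ω ^ 2) μ) (lam : ℝ) :
    ∀ᵐ ω ∂μ, 0 < μ[fun ω => exp (tilt lam (ξ ω))|m] ω := by
  filter_upwards [convexOn_exp.map_condExp_le_univ hm continuous_exp.lowerSemicontinuous
    (hξ.tilt hξ2 lam) (integrable_exp_tilt hξ.1 lam)] with ω h
  exact (exp_pos _).trans_le h

theorem ae_condExp_tilt_mul_exp_tilt_le_half [IsFiniteMeasure μ]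
    (hξ : AEStronglyMeasurable ξ μ) (lam : ℝ) :
    ∀ᵐ ω ∂μ, μ[fun ω => tilt lam (ξ ω) * exp (tilt lam (ξ ω))|m] ω ≤
      μ[fun ω => exp (tilt lam (ξ ω))|m] ω / 2 := by
  filter_upwards [condExp_mono (m := m) (integrable_tilt_mul_exp_tilt hξ lam)
    ((integrable_exp_tilt hξ lam).const_mul (1 / 2)) (ae_of_all _ fun ω => by
      nlinarith [tilt_le_half lam (ξ ω), exp_pos (tilt lam (ξ ω))]),
    condExp_smul (1 / 2 : ℝ) (fun ω => exp (tilt lam (ξ ω))) m] with ω h h'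
  change _ ≤ μ[(1 / 2 : ℝ) • fun ω => exp (tilt lam (ξ ω))|m] ω at h
  rw [h'] at h
  simpa [div_eq_inv_mul] using h

theorem ae_condExp_tilt_mul_condExp_exp_tilt_le (hm : m ≤ m0) [IsFiniteMeasure μ]
    (hξ : Integrable ξ μ) (hξ2 : Integrable (fun ω => ξ ω ^ 2) μ) (hmean : μ[ξ|m] =ᵐ[μ] 0)
    (hvar : ∀ᵐ ω ∂μ, μ[fun ω => ξ ω ^ 2|m] ω ≤ 1) (lam : ℝ) :
    ∀ᵐ ω ∂μ, -(lam ^ 2 / 2) * μ[fun ω => ξ ω ^ 2|m] ω * μ[fun ω => exp (tilt lam (ξ ω))|m] ω ≤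
      μ[fun ω => tilt lam (ξ ω) * exp (tilt lam (ξ ω))|m] ω := by
  have hmean_tilt := condExp_tilt hm hξ hξ2 hmean lam
  have hbdd : ∀ᵐ ω ∂μ, |μ[fun ω => tilt lam (ξ ω)|m] ω| ≤ lam ^ 2 / 2 := by
    filter_upwards [hmean_tilt, hvar, condExp_nonneg (m := m) (μ := μ)
      (ae_of_all μ fun ω => sq_nonneg (ξ ω))] with ω h h1 h0
    rw [h, abs_mul, abs_neg, abs_of_nonneg (by positivity), abs_of_nonneg h0]
    nlinarith [sq_nonneg lam]
  filter_upwards [ae_condExp_mul_condExp_comp_le hm exp_monotone (hξ.tilt hξ2 lam)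
    (integrable_exp_tilt hξ.1 lam) (integrable_tilt_mul_exp_tilt hξ.1 lam) hbdd,
    hmean_tilt] with ω h h'
  rwa [h'] at h

theorem ae_abs_condExp_tilt_mul_exp_div_sub_le (hm : m ≤ m0) [IsFiniteMeasure μ] {ρ : ℝ}
    (hρ0 : 0 ≤ ρ) (hρ1 : ρ ≤ 1) (hξ : MemLp ξ 2 μ)
    (hξρ : Integrable (fun ω => |ξ ω| ^ (2 + ρ)) μ) (hmean : μ[ξ|m] =ᵐ[μ] 0)
    (hvar : ∀ᵐ ω ∂μ, μ[fun ω => ξ ω ^ 2|m] ω ≤ 1) {lam : ℝ} (hlam : 0 ≤ lam) :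
    ∀ᵐ ω ∂μ, |μ[fun ω => tilt lam (ξ ω) * exp (tilt lam (ξ ω))|m] ω /
          μ[fun ω => exp (tilt lam (ξ ω))|m] ω - lam ^ 2 / 2 * μ[fun ω => ξ ω ^ 2|m] ω| ≤
      32 * lam ^ (2 + ρ) * μ[fun ω => |ξ ω| ^ (2 + ρ)|m] ω := by
  have hξ1 : Integrable ξ μ := hξ.integrable one_le_two
  have hξ2 : Integrable (fun ω => ξ ω ^ 2) μ := hξ.integrable_sq
  filter_upwards [ae_abs_condExp_tilt_mul_exp_tilt_sub_le hm hρ0 hρ1 hξ1 hξ2 hξρ hmean hlam,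
    ae_abs_condExp_exp_tilt_sub_one_le hm hξ1 hξ2 hmean lam,
    ae_condExp_exp_tilt_pos hm hξ1 hξ2 lam, ae_condExp_tilt_mul_exp_tilt_le_half hξ.1 lam,
    ae_condExp_tilt_mul_condExp_exp_tilt_le hm hξ1 hξ2 hmean hvar lam,
    condExp_nonneg (m := m) (μ := μ) (ae_of_all μ fun ω => sq_nonneg (ξ ω)),
    ae_rpow_condExp_sq_le hρ0 hξρ] with ω hN hD hD0 hND hsND hs hjensen
  generalize μ[fun ω => ξ ω ^ 2|m] ω = σ at *
  generalize μ[fun ω => |ξ ω| ^ (2 + ρ)|m] ω = τ at *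
  have hT : (lam ^ 2 * σ) ^ ((2 + ρ) / 2) ≤ lam ^ (2 + ρ) * τ := by
    rw [mul_rpow (by positivity) hs, ← rpow_natCast, ← rpow_mul hlam]
    push_cast
    rw [show (2 : ℝ) * ((2 + ρ) / 2) = 2 + ρ by ring]
    exact mul_le_mul_of_nonneg_left hjensen (by positivity)
  have hs2 : lam ^ 2 / 2 * σ = lam ^ 2 * σ / 2 := by ring
  rw [hs2, mul_assoc] at hN ⊢
  rw [mul_assoc] at hD
  exact abs_div_sub_half_le hρ0 hρ1 (mul_nonneg (sq_nonneg lam) hs) hT hN hD hD0 hND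
    (by convert hsND using 1; ring)

end CondExp

namespace MDS

variable {Ω : Type} [MeasurableSpace Ω] {P : Measure Ω} (A : MDS Ω P)

theorem Bsq_pos : 0 < A.Bsq :=
  Finset.sum_pos (fun i hi => A.var_pos i (Finset.mem_Icc.1 hi).1 (Finset.mem_Icc.1 hi).2)
    (Finset.nonempty_Icc.2 A.npos)

theorem xi_eq_mul (i : ℕ) : A.xi i = fun ω => (√A.Bsq)⁻¹ * A.X i ω := by
  ext ω; rw [xi, div_eq_inv_mul]

theorem xi_sq_eq_mul (i : ℕ) : (fun ω => A.xi i ω ^ 2) = fun ω => A.Bsq⁻¹ * A.X i ω ^ 2 := by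
  ext ω; rw [xi, div_pow, sq_sqrt A.Bsq_pos.le, div_eq_inv_mul]

theorem abs_xi_rpow_eq_mul (i : ℕ) (q : ℝ) :
    (fun ω => |A.xi i ω| ^ q) = fun ω => (A.Bsq ^ (q / 2))⁻¹ * |A.X i ω| ^ q := by
  ext ω
  rw [xi, abs_div, abs_of_nonneg (sqrt_nonneg _), div_rpow (abs_nonneg _) (sqrt_nonneg _),
    sqrt_eq_rpow, ← rpow_mul A.Bsq_pos.le, div_eq_inv_mul, one_div_mul_eq_div]

theorem ae_sum_condExp_abs_xi_rpow_le {ρ ε : ℝ} (hA2 : A.CondA2 ρ ε) :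
    ∀ᵐ ω ∂P, ∑ i ∈ Finset.Icc 1 A.n, P[fun ω => |A.xi i ω| ^ (2 + ρ)|A.F (i - 1)] ω ≤ ε ^ ρ := by
  have hB := A.Bsq_pos
  have hscale : ∀ i ∈ Finset.Icc 1 A.n, ∀ᵐ ω ∂P,
      P[fun ω => |A.xi i ω| ^ (2 + ρ)|A.F (i - 1)] ω =
        (A.Bsq ^ ((2 + ρ) / 2))⁻¹ * P[fun ω => |A.X i ω| ^ (2 + ρ)|A.F (i - 1)] ω :=
    fun i _ => by
      rw [abs_xi_rpow_eq_mul]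
      exact condExp_smul (A.Bsq ^ ((2 + ρ) / 2))⁻¹ (fun ω => |A.X i ω| ^ (2 + ρ)) (A.F (i - 1))
  filter_upwards [(eventually_all_finset _).2 hscale, hA2.2.2.2] with ω h hsum
  rw [Finset.sum_congr rfl h, ← Finset.mul_sum, inv_mul_le_iff₀ (by positivity)]
  exact hsum.trans_eq (mul_comm _ _)

variable [IsFiniteMeasure P] {i : ℕ}

theorem ae_abs_bCoef_sub_le {ρ : ℝ} (hρ0 : 0 ≤ ρ) (hρ1 : ρ ≤ 1) (hi1 : 1 ≤ i) (hin : i ≤ A.n)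
    (hXρ : Integrable (fun ω => |A.X i ω| ^ (2 + ρ)) P)
    (hvar : ∀ᵐ ω ∂P, P[fun ω => A.X i ω ^ 2|A.F (i - 1)] ω ≤ A.Bsq) {lam : ℝ} (hlam : 0 ≤ lam) :
    ∀ᵐ ω ∂P, |A.bCoef lam i ω - lam ^ 2 / 2 * P[fun ω => A.xi i ω ^ 2|A.F (i - 1)] ω| ≤
      32 * lam ^ (2 + ρ) * P[fun ω => |A.xi i ω| ^ (2 + ρ)|A.F (i - 1)] ω := by
  have hB := A.Bsq_pos
  have hξ : MemLp (A.xi i) 2 P := by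
    refine (memLp_two_iff_integrable_sq ?_).2 ?_
    · rw [xi_eq_mul]
      exact ((A.meas i hi1 hin).mono (A.F_le i)).aestronglyMeasurable.const_mul _
    · rw [xi_sq_eq_mul]
      exact (A.sq_int i hi1 hin).const_mul _
  have hmean : P[A.xi i|A.F (i - 1)] =ᵐ[P] 0 := by
    filter_upwards [condExp_smul (m := A.F (i - 1)) (√A.Bsq)⁻¹ (A.X i), A.mean_zero i hi1 hin]
      with ω h h0
    rw [xi_eq_mul]
    change P[(√A.Bsq)⁻¹ • A.X i|A.F (i - 1)] ω = 0
    simp [h, h0]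
  have hσ : ∀ᵐ ω ∂P, P[fun ω => A.xi i ω ^ 2|A.F (i - 1)] ω ≤ 1 := by
    filter_upwards [condExp_smul (m := A.F (i - 1)) A.Bsq⁻¹ (fun ω => A.X i ω ^ 2), hvar]
      with ω h hle
    rw [xi_sq_eq_mul]
    change P[A.Bsq⁻¹ • fun ω => A.X i ω ^ 2|A.F (i - 1)] ω ≤ 1
    rw [h, Pi.smul_apply, smul_eq_mul, inv_mul_le_iff₀ hB, mul_one]
    exact hle
  -- `A.bCoef lam i` is this ratio for `ξ = A.xi i`, as `A.zetaFn lam i ω = tilt lam (A.xi i ω)`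
  exact ae_abs_condExp_tilt_mul_exp_div_sub_le (A.F_le (i - 1)) hρ0 hρ1 hξ
    (by rw [abs_xi_rpow_eq_mul]; exact hXρ.const_mul _) hmean hσ hlam

theorem ae_abs_drift_sub_le {ρ ε κ lam : ℝ} (hρ0 : 0 ≤ ρ) (hρ1 : ρ ≤ 1) (hA2 : A.CondA2 ρ ε)
    (hA3 : A.CondA3 κ) (hlam : 0 ≤ lam) :
    ∀ᵐ ω ∂P, |A.drift lam ω - lam ^ 2 / 2 * A.McondVar ω| ≤ 32 * lam ^ (2 + ρ) * ε ^ ρ := by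
  obtain ⟨hκ0, hκ1, hvar⟩ := hA3
  have hterm : ∀ i ∈ Finset.Icc 1 A.n, ∀ᵐ ω ∂P,
      |A.bCoef lam i ω - lam ^ 2 / 2 * P[fun ω => A.xi i ω ^ 2|A.F (i - 1)] ω| ≤
        32 * lam ^ (2 + ρ) * P[fun ω => |A.xi i ω| ^ (2 + ρ)|A.F (i - 1)] ω := by
    intro i hi
    obtain ⟨hi1, hin⟩ := Finset.mem_Icc.1 hi
    refine A.ae_abs_bCoef_sub_le hρ0 hρ1 hi1 hin (hA2.2.2.1 i hi1 hin) ?_ hlam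
    filter_upwards [hvar i hi1 hin] with ω h
    exact h.trans (mul_le_of_le_one_left A.Bsq_pos.le (by nlinarith))
  filter_upwards [(eventually_all_finset _).2 hterm, A.ae_sum_condExp_abs_xi_rpow_le hA2]
    with ω h hsum
  rw [drift, McondVar, Finset.mul_sum, ← Finset.sum_sub_distrib]
  calc _ ≤ _ := Finset.abs_sum_le_sum_abs _ _
    _ ≤ _ := Finset.sum_le_sum h
    _ = 32 * lam ^ (2 + ρ) * ∑ i ∈ Finset.Icc 1 A.n,
          P[fun ω => |A.xi i ω| ^ (2 + ρ)|A.F (i - 1)] ω := by rw [Finset.mul_sum]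
    _ ≤ _ := mul_le_mul_of_nonneg_left hsum (by positivity)

end MDS

/-- Lemma 3.4: under (A2) and (A3) with `ρ ∈ (0,1]`, for
`λ_n = o(max{ε_n^{-1}, κ_n^{-1}})`,
`B_n(λ_n) = (λ_n²/2) ⟨M⟩_n + O(1) λ_n^{2+ρ} ε_n^ρ` a.s. -/
theorem drift_expansion (ρ : ℝ) (hρ : 0 < ρ) (hρ' : ρ ≤ 1) :
    ∃ C : ℝ, 0 < C ∧
      ∀ (Ω : Type) [MeasurableSpace Ω] (P : Measure Ω), IsProbabilityMeasure P →
        ∀ (A : ℕ → MDS Ω P) (ε κ lam : ℕ → ℝ),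
          (∀ n, (A n).CondA2 ρ (ε n)) →
          (∀ n, (A n).CondA3 (κ n)) →
          (∀ n, 0 ≤ lam n) →
          Tendsto (fun n => lam n * min (ε n) (κ n)) atTop (nhds 0) →
          ∀ᶠ n in atTop, ∀ᵐ ω ∂P,
            |(A n).drift (lam n) ω - lam n ^ 2 / 2 * (A n).McondVar ω| ≤
              C * lam n ^ (2 + ρ) * ε n ^ ρ := by
  refine ⟨32, by norm_num, fun Ω _ P _ A ε κ lam hA2 hA3 hlam _ => ?_⟩
  exact Eventually.of_forall fun n =>
    (A n).ae_abs_drift_sub_le hρ.le hρ' (hA2 n) (hA3 n) (hlam n)
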